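/- arXiv:1810.11577 — 2 statements merged into one kernel-verified Lean document; each statement's English description precedes it below -/
import Mathlib

section
/- Nonexistence via growth comparison: Suppose M : [2,∞) → (0,∞) is non-increasing and satisfies M(r) ≥ C₁ M(2r)^p F(r) for all r ≥ 2 (with p > 1, C₁ > 0) together with M(r) ≥ C₂ min(1, F(r)/V(r)), M(2r) ≥ C₃ M(r), and F(r) → ∞. If along a sequence rₙ → ∞ both F(rₙ)/V(rₙ) → 0 and V(rₙ)/F(rₙ)^{p/(p−1)} → 0, then no such function M exists. Equivalently, the inequalities force V(r) ≳ F(r)^{p/(p−1)} along the sequence, contradicting the second limit. -/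
/-!
If `M(r)` is positive with `M(r) ≥ C₁ M(2r)^p F(r)` and `M(2r) ≥ C₃ M(r)`, then
`M(r)^(p-1) ≲ 1/F(r)`, i.e. `M(r) ≲ F(r)^(-1/(p-1))`. Where `F(r) ≤ V(r)` the lower bound
`M(r) ≳ F(r)/V(r)` then gives `V(r) ≳ F(r)^(1 + 1/(p-1)) = F(r)^(p/(p-1))`, which is incompatible
with `V(rₙ)/F(rₙ)^(p/(p-1)) → 0`.
-/

open Filter

theorem le_inv_rpow_of_rpow_mul_le {m a p : ℝ} (hm : 0 < m) (ha : 0 < a) (hp : 1 < p)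
    (h : m ^ p * a ≤ m) : m ≤ a⁻¹ ^ (p - 1)⁻¹ := by
  rw [Real.le_rpow_inv_iff_of_pos hm.le (inv_nonneg.2 ha.le) (sub_pos.2 hp),
    Real.rpow_sub_one hm.ne', le_inv_comm₀ (div_pos (Real.rpow_pos_of_pos hm p) hm) ha,
    inv_div, le_div_iff₀ (Real.rpow_pos_of_pos hm p)]
  linarith

theorem mul_rpow_le_div_rpow_of_superlinear {f v m c C p : ℝ} (hf : 0 < f) (hv : 0 < v)
    (hm : 0 < m) (hc : 0 < c) (hp : 1 < p)
    (hsuper : c * m ^ p * f ≤ m) (hlower : C * (f / v) ≤ m) :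
    C * c ^ (p - 1)⁻¹ ≤ v / f ^ (p / (p - 1)) := by
  have hupper : m ≤ (c ^ (p - 1)⁻¹ * f ^ (p - 1)⁻¹)⁻¹ := by
    rw [← Real.mul_rpow hc.le hf.le, ← Real.inv_rpow (mul_pos hc hf).le]
    exact le_inv_rpow_of_rpow_mul_le hm (mul_pos hc hf) hp (by linarith)
  have hexp : f ^ (p / (p - 1)) = f * f ^ (p - 1)⁻¹ := by
    rw [← Real.rpow_one_add' hf.le (by positivity)]
    congr 1
    field_simp [(sub_pos.2 hp).ne']
    ring
  have hcq := Real.rpow_pos_of_pos hc (p - 1)⁻¹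
  have hfq := Real.rpow_pos_of_pos hf (p - 1)⁻¹
  rw [hexp, le_div_iff₀ (mul_pos hf hfq)]
  have := hlower.trans hupper
  rw [mul_div_assoc', div_le_iff₀ hv, ← div_eq_inv_mul, le_div_iff₀ (mul_pos hcq hfq)] at this
  linarith

theorem stmt17_general (F V M : ℝ → ℝ) (p C₁ C₂ C₃ : ℝ)
    (hp : 1 < p) (hC₁ : 0 < C₁) (hC₂ : 0 < C₂) (hC₃ : 0 < C₃)
    (hFpos : ∀ r : ℝ, 2 ≤ r → 0 < F r) (hVpos : ∀ r : ℝ, 2 ≤ r → 0 < V r)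
    (hMpos : ∀ r : ℝ, 2 ≤ r → 0 < M r)
    (hM1 : ∀ r : ℝ, 2 ≤ r → C₁ * M (2 * r) ^ p * F r ≤ M r)
    (hM2 : ∀ r : ℝ, 2 ≤ r → C₂ * min 1 (F r / V r) ≤ M r)
    (hM3 : ∀ r : ℝ, 2 ≤ r → C₃ * M r ≤ M (2 * r))
    (r : ℕ → ℝ) (hrinf : Filter.Tendsto r Filter.atTop Filter.atTop)
    (hlim1 : Filter.Tendsto (fun n => F (r n) / V (r n)) Filter.atTop (nhds 0))
    (hlim2 : Filter.Tendsto (fun n => V (r n) / F (r n) ^ (p / (p - 1)))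
      Filter.atTop (nhds 0)) :
    False := by
  set c := C₁ * C₃ ^ p
  have hc : 0 < c := mul_pos hC₁ (Real.rpow_pos_of_pos hC₃ p)
  have hsuper : ∀ s, 2 ≤ s → c * M s ^ p * F s ≤ M s := fun s hs => calc
    c * M s ^ p * F s = C₁ * (C₃ * M s) ^ p * F s := by
      rw [Real.mul_rpow hC₃.le (hMpos s hs).le]; ring
    _ ≤ C₁ * M (2 * s) ^ p * F s := by
      gcongr
      · exact (hFpos s hs).le
      · exact mul_nonneg hC₃.le (hMpos s hs).le
      · exact hM3 s hs
    _ ≤ M s := hM1 s hs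
  have hε : 0 < C₂ * c ^ (p - 1)⁻¹ := mul_pos hC₂ (Real.rpow_pos_of_pos hc _)
  obtain ⟨n, hrn, hFV, hsmall⟩ := ((hrinf.eventually_ge_atTop 2).and
    ((hlim1.eventually (eventually_le_nhds one_pos)).and
      (hlim2.eventually (eventually_lt_nhds hε)))).exists
  have hlower := hM2 (r n) hrn
  rw [min_eq_right hFV] at hlower
  exact (mul_rpow_le_div_rpow_of_superlinear (hFpos _ hrn) (hVpos _ hrn) (hMpos _ hrn) hc hp
    (hsuper _ hrn) hlower).not_gt hsmall

theorem stmt17 (F V M : ℝ → ℝ) (p C₁ C₂ C₃ : ℝ)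
    (hp : 1 < p) (hC₁ : 0 < C₁) (hC₂ : 0 < C₂) (hC₃ : 0 < C₃)
    (hFpos : ∀ r : ℝ, 2 ≤ r → 0 < F r) (hVpos : ∀ r : ℝ, 2 ≤ r → 0 < V r)
    (hMpos : ∀ r : ℝ, 2 ≤ r → 0 < M r)
    (hManti : AntitoneOn M (Set.Ici 2))
    (hM1 : ∀ r : ℝ, 2 ≤ r → C₁ * M (2 * r) ^ p * F r ≤ M r)
    (hM2 : ∀ r : ℝ, 2 ≤ r → C₂ * min 1 (F r / V r) ≤ M r)
    (hM3 : ∀ r : ℝ, 2 ≤ r → C₃ * M r ≤ M (2 * r))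
    (hFinf : Filter.Tendsto F Filter.atTop Filter.atTop)
    (r : ℕ → ℝ) (hrinf : Filter.Tendsto r Filter.atTop Filter.atTop)
    (hlim1 : Filter.Tendsto (fun n => F (r n) / V (r n)) Filter.atTop (nhds 0))
    (hlim2 : Filter.Tendsto (fun n => V (r n) / F (r n) ^ (p / (p - 1)))
      Filter.atTop (nhds 0)) :
    False :=
  stmt17_general F V M p C₁ C₂ C₃ hp hC₁ hC₂ hC₃ hFpos hVpos hMpos hM1 hM2 hM3 r hrinf hlim1 hlim2
end

section
/- Eigenvalue survival bound: Let (u, λ) with λ > 0 and u not identically zero satisfy u(x) = E_x[e^{λt} u(X_t) 1_{t<τ_B}] restricted to a ball B where u > 0 on B̄, and let (u_B, λ_B) be the principal Dirichlet eigenpair on B with u_B(x₀) > 0, so that u_B(x₀) = E_{x₀}[e^{λ_B t} u_B(X_t) 1_{t<τ_B}]. Then λ ≤ λ_B. Consequently, combined with the eigenvalue bound λ_B ≤ C₁/F(r) for the ball of radius r, any eigenfunction with eigenvalue λ must vanish somewhere in every ball of radius R(Cλ^{−1}) contained in Ω, for C > C₁, where R = F^{−1}. -/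
/-!
Compare the two Feynman–Kac identities along the same killed paths. While a path is alive it
stays in the closed ball, where `m ≤ u` and `uB ≤ M`; hence `P(t < τ) ≤ e^{-λt} u(x₀) / m` and
`uB(x₀) ≤ e^{λ_B t} M P(t < τ)`, i.e. `uB(x₀) e^{λt} ≤ (M / m) u(x₀) e^{λ_B t}` for all `t ≥ 0`.
Letting `t → ∞` forces `λ ≤ λ_B`, and then `λ = C / F(r)` contradicts `λ_B ≤ C₁ / F(r)` when
`C₁ < C`.
-/

open MeasureTheory Filter Real

theorem le_of_forall_mul_exp_le {a b c K : ℝ} (hc : 0 < c)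
    (h : ∀ t, 0 ≤ t → c * exp (a * t) ≤ K * exp (b * t)) : a ≤ b := by
  by_contra! hba
  have hgrow : Tendsto (fun t => c * exp ((a - b) * t)) atTop atTop :=
    (tendsto_exp_comp_atTop.mpr (tendsto_id.const_mul_atTop (sub_pos.mpr hba))).const_mul_atTop hc
  obtain ⟨t, ht0, hKt⟩ := ((eventually_ge_atTop 0).and (hgrow.eventually_gt_atTop K)).exists
  have hsplit : c * exp (a * t) = c * exp ((a - b) * t) * exp (b * t) := by
    rw [mul_assoc, ← exp_add]
    ring_nf
  have := mul_lt_mul_of_pos_right hKt (exp_pos (b * t))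
  linarith [h t ht0]

section FeynmanKac

variable {Ω E : Type*} [MeasurableSpace Ω] {μ : Measure Ω} {S : Set E} {u v : E → ℝ}
  {m M : ℝ}

theorem integral_mul_ite_le_div_mul {X : Ω → E} {p : Ω → Prop} [DecidablePred p]
    (hX : ∀ ω, p ω → X ω ∈ S) (hm : 0 < m) (hM : 0 ≤ M) (hu : ∀ y ∈ S, m ≤ u y)
    (hv : ∀ y ∈ S, v y ≤ M) (hui : Integrable (fun ω => u (X ω) * if p ω then 1 else 0) μ)
    (hvi : Integrable (fun ω => v (X ω) * if p ω then 1 else 0) μ) :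
    ∫ ω, v (X ω) * (if p ω then 1 else 0) ∂μ ≤
      M / m * ∫ ω, u (X ω) * (if p ω then 1 else 0) ∂μ := by
  rw [← integral_const_mul]
  refine integral_mono hvi (hui.const_mul _) fun ω => ?_
  by_cases hp : p ω
  · simp only [if_pos hp, mul_one]
    calc v (X ω) ≤ M := hv _ (hX ω hp)
      _ = M / m * m := by field_simp
      _ ≤ M / m * u (X ω) := by gcongr; exact hu _ (hX ω hp)
  · simp [hp]

variable {X : ℝ → Ω → E} {τ : Ω → ℝ} {a b cu cv : ℝ}

theorem mul_exp_le_of_feynmanKac (hX : ∀ ω t, 0 ≤ t → t < τ ω → X t ω ∈ S) (hm : 0 < m)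
    (hM : 0 ≤ M) (hu : ∀ y ∈ S, m ≤ u y) (hv : ∀ y ∈ S, v y ≤ M) (hcu : cu ≠ 0) (hcv : cv ≠ 0)
    (hFKu : ∀ t, 0 ≤ t → cu = ∫ ω, exp (a * t) * u (X t ω) * (if t < τ ω then 1 else 0) ∂μ)
    (hFKv : ∀ t, 0 ≤ t → cv = ∫ ω, exp (b * t) * v (X t ω) * (if t < τ ω then 1 else 0) ∂μ)
    {t : ℝ} (ht : 0 ≤ t) : cv * exp (a * t) ≤ M / m * cu * exp (b * t) := by
  have hcu_eq := hFKu t ht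
  have hcv_eq := hFKv t ht
  simp only [mul_assoc, integral_const_mul] at hcu_eq hcv_eq
  have hui := Integrable.of_integral_ne_zero fun h => hcu (by rw [hcu_eq, h, mul_zero])
  have hvi := Integrable.of_integral_ne_zero fun h => hcv (by rw [hcv_eq, h, mul_zero])
  have hcmp := integral_mul_ite_le_div_mul (fun ω hω => hX ω t ht hω) hm hM hu hv hui hvi
  calc cv * exp (a * t)
      = exp (b * t) * (∫ ω, v (X t ω) * if t < τ ω then 1 else 0 ∂μ) * exp (a * t) := by
        rw [hcv_eq]
    _ ≤ exp (b * t) * (M / m * ∫ ω, u (X t ω) * if t < τ ω then 1 else 0 ∂μ) * exp (a * t) := by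
        gcongr
    _ = M / m * cu * exp (b * t) := by rw [hcu_eq]; ring

theorem le_of_feynmanKac (hX : ∀ ω t, 0 ≤ t → t < τ ω → X t ω ∈ S) (hm : 0 < m)
    (hM : 0 ≤ M) (hu : ∀ y ∈ S, m ≤ u y) (hv : ∀ y ∈ S, v y ≤ M) (hcu : cu ≠ 0) (hcv : 0 < cv)
    (hFKu : ∀ t, 0 ≤ t → cu = ∫ ω, exp (a * t) * u (X t ω) * (if t < τ ω then 1 else 0) ∂μ)
    (hFKv : ∀ t, 0 ≤ t → cv = ∫ ω, exp (b * t) * v (X t ω) * (if t < τ ω then 1 else 0) ∂μ) :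
    a ≤ b :=
  le_of_forall_mul_exp_le hcv fun _ ht =>
    mul_exp_le_of_feynmanKac hX hm hM hu hv hcu hcv.ne' hFKu hFKv ht

end FeynmanKac

theorem stmt18_general {E : Type*} [MeasurableSpace E] [PseudoMetricSpace E]
    (P : E → MeasureTheory.Measure (ℝ → E))
    (τB : (ℝ → E) → ℝ)
    (u uB : E → ℝ) (lam lamB C₁ C Fr : ℝ) (hlam : 0 < lam)
    (xc : E) (r : ℝ)
    (hpath : ∀ (ω : ℝ → E) (t : ℝ), 0 ≤ t → t < τB ω → ω t ∈ Metric.closedBall xc r)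
    (hm : ∃ m > (0:ℝ), ∀ y ∈ Metric.closedBall xc r, m ≤ u y)
    (huBbd : ∃ Mb, ∀ y, |uB y| ≤ Mb)
    (x₀ : E) (hx₀ : x₀ ∈ Metric.ball xc r) (huB₀ : 0 < uB x₀)
    (hFKu : ∀ t : ℝ, 0 ≤ t →
      u x₀ = ∫ ω, Real.exp (lam * t) * u (ω t) * (if t < τB ω then 1 else 0) ∂P x₀)
    (hFKuB : ∀ t : ℝ, 0 ≤ t →
      uB x₀ = ∫ ω, Real.exp (lamB * t) * uB (ω t) * (if t < τB ω then 1 else 0) ∂P x₀) :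
    lam ≤ lamB ∧ (lamB ≤ C₁ / Fr → Fr = C / lam → C₁ < C → 0 < Fr → False) := by
  obtain ⟨m, hm0, hmu⟩ := hm
  obtain ⟨M, hM⟩ := huBbd
  have hux₀ : 0 < u x₀ := hm0.trans_le (hmu x₀ (Metric.ball_subset_closedBall hx₀))
  have hlam_le : lam ≤ lamB :=
    le_of_feynmanKac (X := fun t (ω : ℝ → E) => ω t) hpath hm0 ((abs_nonneg _).trans (hM x₀)) hmu
      (fun y _ => (le_abs_self _).trans (hM y)) hux₀.ne' huB₀ hFKu hFKuB
  refine ⟨hlam_le, fun hlamB hFr hC hFr0 => ?_⟩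
  have hC_eq : C = lam * Fr := by rw [hFr]; field_simp [hlam.ne']
  have : lam * Fr ≤ C₁ := (le_div_iff₀ hFr0).mp (hlam_le.trans hlamB)
  linarith

theorem stmt18 {E : Type*} [MeasurableSpace E] [PseudoMetricSpace E]
    (P : E → MeasureTheory.Measure (ℝ → E))
    (hP : ∀ x, MeasureTheory.IsProbabilityMeasure (P x))
    (τB : (ℝ → E) → ℝ)
    (u uB : E → ℝ) (lam lamB C₁ C Fr : ℝ) (hlam : 0 < lam)
    (xc : E) (r : ℝ) (hr : 0 < r)
    (hpath : ∀ (ω : ℝ → E) (t : ℝ), 0 ≤ t → t < τB ω → ω t ∈ Metric.closedBall xc r)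
    (hupos : ∀ y ∈ Metric.closedBall xc r, 0 < u y)
    (hm : ∃ m > (0:ℝ), ∀ y ∈ Metric.closedBall xc r, m ≤ u y)
    (hubd : ∃ Mb, ∀ y, |u y| ≤ Mb) (huBbd : ∃ Mb, ∀ y, |uB y| ≤ Mb)
    (x₀ : E) (hx₀ : x₀ ∈ Metric.ball xc r) (huB₀ : 0 < uB x₀)
    (hFKu : ∀ t : ℝ, 0 ≤ t →
      u x₀ = ∫ ω, Real.exp (lam * t) * u (ω t) * (if t < τB ω then 1 else 0) ∂P x₀)
    (hFKuB : ∀ t : ℝ, 0 ≤ t →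
      uB x₀ = ∫ ω, Real.exp (lamB * t) * uB (ω t) * (if t < τB ω then 1 else 0) ∂P x₀) :
    lam ≤ lamB ∧ (lamB ≤ C₁ / Fr → Fr = C / lam → C₁ < C → 0 < Fr → False) :=
  stmt18_general P τB u uB lam lamB C₁ C Fr hlam xc r hpath hm huBbd x₀ hx₀ huB₀ hFKu hFKuB
end
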